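/- For every integer m ≥ 3, the homogeneous weight enumerator of the binary Reed–Muller code RM_2(m−2, m) equals (1/2^{m+1}) · ((x − y)^{2^m} + 2(2^m − 1)(x − y)^{2^{m−1}}(x + y)^{2^{m−1}} + (x + y)^{2^m}). -/

import Mathlib

open Finset

noncomputable def homWeightEnum (R : Type*) [CommRing R] {F : Type*} [Field F] [Fintype F]
    [DecidableEq F] {ι : Type*} [Fintype ι] (C : Submodule F (ι → F)) : MvPolynomial (Fin 2) R :=
  ∑ c ∈ (Set.toFinite (C : Set (ι → F))).toFinset,
    MvPolynomial.X 0 ^ (Fintype.card ι - hammingNorm c) * MvPolynomial.X 1 ^ hammingNorm c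

def RMCode (F : Type*) [CommSemiring F] (r m : ℕ) : Submodule F ((Fin m → F) → F) where
  carrier := {f | ∃ p : MvPolynomial (Fin m) F, p.totalDegree ≤ r ∧ ∀ v, MvPolynomial.eval v p = f v}
  zero_mem' := ⟨0, by simp⟩
  add_mem' := by
    rintro f g ⟨p, hp, hpe⟩ ⟨q, hq, hqe⟩
    exact ⟨p + q, le_trans (MvPolynomial.totalDegree_add p q) (max_le hp hq),
      fun v => by simp [hpe v, hqe v]⟩
  smul_mem' := by
    rintro c f ⟨p, hp, hpe⟩
    exact ⟨c • p, le_trans (MvPolynomial.totalDegree_smul_le c p) hp,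
      fun v => by simp [hpe v]⟩

/-!
`RM₂(m - 2, m)` is the dual code of the first-order Reed–Muller code `RM₂(1, m)` of affine
functions: the product of a polynomial of degree `≤ m - 2` with one of degree `≤ 1` has degree
`< m`, so it sums to zero over `𝔽₂ᵐ` (Chevalley–Warning); conversely, if `f` is orthogonal to
all affine functions, the coefficients of its algebraic normal form in degrees `m - 1` and `m`
vanish. The affine code has one word of each weight `0` and `2ᵐ` and `2ᵐ⁺¹ - 2` words of
weight `2ᵐ⁻¹`, and the formula is the MacWilliams transform
`W_{C⊥}(x, y) = |C|⁻¹ W_C(x + y, x - y)`, proved with the character `t ↦ (-1)ᵗ` of `𝔽₂`.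
-/

open MvPolynomial Matrix

lemma ZMod.ne_zero_iff_eq_one {a : ZMod 2} : a ≠ 0 ↔ a = 1 := by
  revert a; decide

lemma ZMod.sum_univ_two {M : Type*} [AddCommMonoid M] (f : ZMod 2 → M) : ∑ t, f t = f 0 + f 1 :=
  Fin.sum_univ_two f

def signChar (S : Type*) [CommRing S] : AddChar (ZMod 2) S := AddChar.zmodChar 2 neg_one_sq

section SignChar

variable {S : Type*} [CommRing S]

lemma signChar_one : signChar S 1 = -1 := by
  simp [signChar, AddChar.zmodChar_apply, show (1 : ZMod 2).val = 1 from rfl]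

lemma signChar_add_one (x : ZMod 2) : signChar S (x + 1) = -signChar S x := by
  rw [AddChar.map_add_eq_mul, signChar_one, mul_neg_one]

end SignChar

lemma AddChar.map_sum_eq_prod {A M κ : Type*} [AddCommMonoid A] [CommMonoid M] (ψ : AddChar A M)
    (s : Finset κ) (a : κ → A) : ψ (∑ i ∈ s, a i) = ∏ i ∈ s, ψ (a i) :=
  map_prod ψ.toMonoidHom (fun i => Multiplicative.ofAdd (a i)) s

section WeightEnumerator

variable {ι : Type*} [Fintype ι]

lemma prod_ite_eq_zero_eq_pow_hammingNorm {M F : Type*} [CommMonoid M] [Zero F] [DecidableEq F]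
    (g : ι → F) (a b : M) :
    ∏ i, (if g i = 0 then a else b) = a ^ (Fintype.card ι - hammingNorm g) * b ^ hammingNorm g := by
  have hcard := card_filter_add_card_filter_not (s := univ) (fun i => g i = 0)
  rw [card_univ] at hcard
  rw [prod_ite, prod_const, prod_const]
  simp only [hammingNorm, ne_eq]
  congr 2
  omega

lemma homWeightEnum_range_of_injective (R : Type*) [CommRing R] {ι K V : Type*} [Fintype ι]
    [Field K] [Fintype K] [DecidableEq K] [AddCommGroup V] [Module K V] [Fintype V]
    {L : V →ₗ[K] ι → K} (hL : Function.Injective L) :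
    homWeightEnum R (LinearMap.range L) =
      ∑ x, X 0 ^ (Fintype.card ι - hammingNorm (L x)) * X 1 ^ hammingNorm (L x) := by
  classical
  have hcode : (Set.toFinite (LinearMap.range L : Set (ι → K))).toFinset = univ.image L := by
    ext; simp
  rw [homWeightEnum, hcode, sum_image fun x _ y _ h => hL h]

lemma two_mul_hammingNorm_eq_card {V : Type*} [AddGroup V] [Fintype V] (g : V → ZMod 2) (u : V)
    (hu : ∀ v, g (v + u) = g v + 1) : 2 * hammingNorm g = Fintype.card V := by
  have hswap : #{v | g v ≠ 0} = #{v | g v = 0} := by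
    refine card_equiv (Equiv.addRight u) fun v => ?_
    simp only [mem_filter, mem_univ, true_and, Equiv.coe_addRight, hu]
    generalize g v = a
    revert a; decide
  have hsplit := card_filter_add_card_filter_not (s := univ) (fun v => g v = 0)
  simp only [hammingNorm, ne_eq, card_univ] at hswap hsplit ⊢
  omega

variable {S : Type*} [CommRing S]

lemma sum_signChar_dotProduct_mul_weight [DecidableEq ι] (g : ι → ZMod 2) (x y : S) :
    ∑ f : ι → ZMod 2,
        signChar S (g ⬝ᵥ f) * (x ^ (Fintype.card ι - hammingNorm f) * y ^ hammingNorm f) =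
      (x + y) ^ (Fintype.card ι - hammingNorm g) * (x - y) ^ hammingNorm g := by
  have hcoord : ∀ i, ∑ t : ZMod 2, signChar S (g i * t) * (if t = 0 then x else y) =
      if g i = 0 then x + y else x - y := by
    intro i
    rw [ZMod.sum_univ_two]
    rcases (by decide : ∀ t : ZMod 2, t = 0 ∨ t = 1) (g i) with h | h <;>
      simp [h, signChar_one, sub_eq_add_neg]
  calc _ = ∑ f : ι → ZMod 2, ∏ i, signChar S (g i * f i) * (if f i = 0 then x else y) := by
          refine sum_congr rfl fun f _ => ?_
          rw [prod_mul_distrib, prod_ite_eq_zero_eq_pow_hammingNorm, dotProduct,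
            AddChar.map_sum_eq_prod]
    _ = ∏ i, ∑ t : ZMod 2, signChar S (g i * t) * (if t = 0 then x else y) :=
          (Fintype.prod_sum (fun i t => signChar S (g i * t) * (if t = 0 then x else y))).symm
    _ = _ := by simp only [hcoord, prod_ite_eq_zero_eq_pow_hammingNorm]

def dualCode {F : Type*} [CommRing F] (C : Submodule F (ι → F)) : Submodule F (ι → F) where
  carrier := {x | ∀ c ∈ C, c ⬝ᵥ x = 0}
  zero_mem' c _ := dotProduct_zero c
  add_mem' hx hy c hc := by rw [dotProduct_add, hx c hc, hy c hc, add_zero]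
  smul_mem' a x hx c hc := by rw [dotProduct_smul, hx c hc, smul_zero]

open Classical in
lemma sum_signChar_dotProduct (C : Submodule (ZMod 2) (ι → ZMod 2)) (f : ι → ZMod 2) :
    ∑ g ∈ (Set.toFinite (C : Set (ι → ZMod 2))).toFinset, signChar S (g ⬝ᵥ f) =
      if f ∈ dualCode C then (Nat.card C : S) else 0 := by
  split_ifs with hf
  · rw [sum_congr rfl fun g hg => by
        rw [hf g ((Set.Finite.mem_toFinset _).1 hg), AddChar.map_zero_eq_one], sum_const, nsmul_one]
    exact congrArg Nat.cast (Nat.card_eq_card_finite_toFinset (Set.toFinite _)).symm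
  · obtain ⟨g₀, hg₀, hg₀f⟩ : ∃ g₀ ∈ C, g₀ ⬝ᵥ f ≠ 0 := by simpa [dualCode] using hf
    -- translation by `g₀` pairs off codewords with opposite signs
    refine sum_involution (fun g _ => g + g₀) (fun g _ => ?_) (fun g _ _ h => ?_)
      (fun g hg => ?_) (fun g _ => ?_)
    · rw [add_dotProduct, ZMod.ne_zero_iff_eq_one.1 hg₀f, signChar_add_one, add_neg_cancel]
    · rw [add_eq_left.1 h, zero_dotProduct] at hg₀f
      exact hg₀f rfl
    · simpa using C.add_mem ((Set.Finite.mem_toFinset _).1 hg) hg₀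
    · rw [add_assoc, ZModModule.add_self, add_zero]

theorem natCard_mul_homWeightEnum_dualCode (R : Type*) [CommRing R]
    (C : Submodule (ZMod 2) (ι → ZMod 2)) :
    (Nat.card C : MvPolynomial (Fin 2) R) * homWeightEnum R (dualCode C) =
      aeval ![X 0 + X 1, X 0 - X 1] (homWeightEnum R C) := by
  classical
  set w : (ι → ZMod 2) → MvPolynomial (Fin 2) R :=
    fun f => X 0 ^ (Fintype.card ι - hammingNorm f) * X 1 ^ hammingNorm f
  have hdual : (Set.toFinite (dualCode C : Set (ι → ZMod 2))).toFinset =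
      univ.filter (· ∈ dualCode C) := by
    ext; simp
  calc _ = ∑ f, (if f ∈ dualCode C then (Nat.card C : MvPolynomial (Fin 2) R) else 0) * w f := by
        rw [homWeightEnum, hdual, sum_filter, mul_sum]
        exact sum_congr rfl fun f _ => by split_ifs <;> simp [w]
    _ = ∑ f, ∑ g ∈ (Set.toFinite (C : Set (ι → ZMod 2))).toFinset,
          signChar _ (g ⬝ᵥ f) * w f := by
        simp_rw [← sum_signChar_dotProduct, sum_mul]
    _ = _ := by
        rw [sum_comm, homWeightEnum, map_sum]
        simp [w, sum_signChar_dotProduct_mul_weight]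

end WeightEnumerator

section ReedMuller

variable {m : ℕ}

def affineEval (F : Type*) [CommRing F] (m : ℕ) :
    F × (Fin m → F) →ₗ[F] (Fin m → F) → F where
  toFun p v := p.1 + p.2 ⬝ᵥ v
  map_add' p q := by
    ext v
    simp only [Prod.fst_add, Prod.snd_add, add_dotProduct, Pi.add_apply]
    ring
  map_smul' a p := by ext v; simp [smul_dotProduct, mul_add]

def affineCode (F : Type*) [CommRing F] (m : ℕ) : Submodule F ((Fin m → F) → F) :=
  LinearMap.range (affineEval F m)

variable {F : Type*} [CommRing F]

lemma affineEval_apply (a : F) (b v : Fin m → F) : affineEval F m (a, b) v = a + b ⬝ᵥ v := rfl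

lemma affineEval_injective : Function.Injective (affineEval F m) := by
  refine (injective_iff_map_eq_zero _).2 fun ⟨a, b⟩ h => ?_
  have ha : a = 0 := by simpa [affineEval_apply] using congrFun h 0
  subst ha
  refine Prod.ext rfl (funext fun i => ?_)
  simpa [affineEval_apply] using congrFun h (Pi.single i 1)

lemma affineCode_le_RMCode_one : affineCode F m ≤ RMCode F 1 m := by
  rintro _ ⟨⟨a, b⟩, rfl⟩
  refine ⟨C a + ∑ i, C (b i) * X i, ?_, fun v => ?_⟩
  · refine (totalDegree_add _ _).trans (max_le (by simp) ?_)
    refine (totalDegree_finsetSum _ _).trans (Finset.sup_le fun i _ => ?_)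
    rw [C_mul_X_eq_monomial]
    exact (totalDegree_monomial_le _ _).trans (by simp)
  · simp [affineEval_apply, dotProduct]

lemma prod_one_add_mem_affineCode {T : Finset (Fin m)} (hT : T.card ≤ 1) :
    (fun w : Fin m → F => ∏ i ∈ T, (1 + w i)) ∈ affineCode F m := by
  obtain rfl | ⟨j, rfl⟩ : T = ∅ ∨ ∃ j, T = {j} := by
    rcases Nat.le_one_iff_eq_zero_or_eq_one.1 hT with h | h
    · exact .inl (card_eq_zero.1 h)
    · exact .inr (card_eq_one.1 h)
  · exact ⟨(1, 0), funext fun v => by rw [affineEval_apply, zero_dotProduct, add_zero, prod_empty]⟩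
  · exact ⟨(1, Pi.single j 1), funext fun v => by
      rw [affineEval_apply, single_one_dotProduct, prod_singleton]⟩

lemma dotProduct_eq_zero_of_mem_RMCode {K : Type*} [Field K] [Fintype K] {r s : ℕ}
    (hrs : r + s < (Fintype.card K - 1) * m) {f g : (Fin m → K) → K}
    (hf : f ∈ RMCode K r m) (hg : g ∈ RMCode K s m) : f ⬝ᵥ g = 0 := by
  obtain ⟨p, hp, hpf⟩ := hf
  obtain ⟨q, hq, hqg⟩ := hg
  calc f ⬝ᵥ g = ∑ v, eval v (p * q) := by simp [dotProduct, ← hpf, ← hqg]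
    _ = 0 := sum_eval_eq_zero _ <| by
        simpa using (totalDegree_mul p q).trans_lt ((add_le_add hp hq).trans_lt hrs)

/-- The coefficient of `∏ i ∈ S, X i` in the algebraic normal form of `f`, i.e. in the unique
multilinear polynomial over `𝔽₂` that evaluates to `f` (binary Möbius inversion). -/
def anfCoeff (f : (Fin m → ZMod 2) → ZMod 2) (S : Finset (Fin m)) : ZMod 2 :=
  (fun w => ∏ i ∈ Sᶜ, (1 + w i)) ⬝ᵥ f

lemma prod_add_one_add_eq_ite (v w : Fin m → ZMod 2) :
    ∏ i, (v i + (1 + w i)) = if v = w then 1 else 0 := by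
  split_ifs with h
  · subst h
    exact prod_eq_one fun i _ => by generalize v i = a; revert a; decide
  · obtain ⟨i, hi⟩ := Function.ne_iff.1 h
    refine prod_eq_zero (mem_univ i) ?_
    generalize v i = a, w i = b at hi ⊢
    revert a b; decide

lemma sum_anfCoeff_mul_prod (f : (Fin m → ZMod 2) → ZMod 2) (v : Fin m → ZMod 2) :
    ∑ S, anfCoeff f S * ∏ i ∈ S, v i = f v := by
  calc ∑ S, anfCoeff f S * ∏ i ∈ S, v i
        = ∑ w, f w * ∑ S, (∏ i ∈ S, v i) * ∏ i ∈ Sᶜ, (1 + w i) := by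
          simp only [anfCoeff, dotProduct, sum_mul, mul_sum]
          rw [sum_comm]
          exact sum_congr rfl fun w _ => sum_congr rfl fun S _ => by ring
    _ = ∑ w, f w * if v = w then 1 else 0 := by
          simp_rw [← Fintype.prod_add, prod_add_one_add_eq_ite]
    _ = f v := by simp

lemma mem_RMCode_of_anfCoeff_eq_zero {r : ℕ} {f : (Fin m → ZMod 2) → ZMod 2}
    (h : ∀ S : Finset (Fin m), r < S.card → anfCoeff f S = 0) : f ∈ RMCode (ZMod 2) r m := by
  refine ⟨∑ S, C (anfCoeff f S) * ∏ i ∈ S, X i, ?_, fun v => ?_⟩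
  · refine (totalDegree_finsetSum _ _).trans (Finset.sup_le fun S _ => ?_)
    by_cases hS : r < S.card
    · simp [h S hS]
    · refine (totalDegree_mul _ _).trans ?_
      refine le_trans ?_ (not_lt.1 hS)
      simpa using totalDegree_finsetProd S (X (R := ZMod 2))
  · simp [sum_anfCoeff_mul_prod]

lemma anfCoeff_eq_zero_of_mem_dualCode {f : (Fin m → ZMod 2) → ZMod 2}
    (hf : f ∈ dualCode (affineCode (ZMod 2) m)) {S : Finset (Fin m)} (hS : m ≤ S.card + 1) :
    anfCoeff f S = 0 :=
  hf _ <| prod_one_add_mem_affineCode <| by rw [card_compl, Fintype.card_fin]; omega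

theorem RMCode_sub_two_eq_dualCode (hm : 2 ≤ m) :
    RMCode (ZMod 2) (m - 2) m = dualCode (affineCode (ZMod 2) m) := by
  refine le_antisymm (fun f hf c hc => ?_) fun f hf =>
    mem_RMCode_of_anfCoeff_eq_zero fun S hS => anfCoeff_eq_zero_of_mem_dualCode hf (by omega)
  exact dotProduct_eq_zero_of_mem_RMCode (by rw [ZMod.card]; omega) (affineCode_le_RMCode_one hc) hf

lemma hammingNorm_affineEval {a : ZMod 2} {b : Fin m → ZMod 2} (hb : b ≠ 0) :
    hammingNorm (affineEval (ZMod 2) m (a, b)) = 2 ^ (m - 1) := by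
  obtain ⟨j, hj⟩ := Function.ne_iff.1 hb
  have h := two_mul_hammingNorm_eq_card (affineEval (ZMod 2) m (a, b)) (Pi.single j 1) fun v => by
    rw [affineEval_apply, affineEval_apply, dotProduct_add, dotProduct_single_one,
      ZMod.ne_zero_iff_eq_one.1 hj, add_assoc]
  have hcard : Fintype.card (Fin m → ZMod 2) = 2 * 2 ^ (m - 1) := by
    rw [Fintype.card_fun, ZMod.card, Fintype.card_fin, ← pow_succ', Nat.sub_add_cancel (Fin.pos j)]
  omega

lemma natCard_affineCode : Nat.card (affineCode (ZMod 2) m) = 2 ^ (m + 1) := by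
  rw [affineCode, ← Nat.card_congr (LinearEquiv.ofInjective _ affineEval_injective).toEquiv]
  simp [pow_succ']

lemma homWeightEnum_affineCode (R : Type*) [CommRing R] (hm : 1 ≤ m) :
    homWeightEnum R (affineCode (ZMod 2) m) =
      X 0 ^ 2 ^ m + ((2 * (2 ^ m - 1) : ℕ) : MvPolynomial (Fin 2) R) *
        (X 0 ^ 2 ^ (m - 1) * X 1 ^ 2 ^ (m - 1)) + X 1 ^ 2 ^ m := by
  have hcard : Fintype.card (Fin m → ZMod 2) = 2 ^ m := by simp
  have hhalf : 2 ^ m - 2 ^ (m - 1) = 2 ^ (m - 1) := by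
    rw [← Nat.sub_add_cancel hm, pow_succ, Nat.add_sub_cancel]; omega
  have hrow : ∀ a : ZMod 2,
      ∑ b, (X 0 ^ (2 ^ m - hammingNorm (affineEval (ZMod 2) m (a, b))) *
          X 1 ^ hammingNorm (affineEval (ZMod 2) m (a, b)) : MvPolynomial (Fin 2) R) =
        X 0 ^ (2 ^ m - hammingNorm (affineEval (ZMod 2) m (a, 0))) *
            X 1 ^ hammingNorm (affineEval (ZMod 2) m (a, 0)) +
          ((2 ^ m - 1 : ℕ) : MvPolynomial (Fin 2) R) * (X 0 ^ 2 ^ (m - 1) * X 1 ^ 2 ^ (m - 1)) := by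
    intro a
    rw [← add_sum_erase _ _ (mem_univ 0), sum_congr rfl fun b hb => by
      rw [hammingNorm_affineEval (ne_of_mem_erase hb), hhalf], sum_const,
      card_erase_of_mem (mem_univ _), card_univ, hcard, nsmul_eq_mul]
  have hzero : hammingNorm (affineEval (ZMod 2) m (0, 0)) = 0 := by
    rw [Prod.mk_zero_zero, map_zero, hammingNorm_zero]
  have hone : hammingNorm (affineEval (ZMod 2) m (1, 0)) = 2 ^ m := by
    simp [hammingNorm, affineEval_apply]
  rw [affineCode, homWeightEnum_range_of_injective R affineEval_injective, hcard,
    Fintype.sum_prod_type, ZMod.sum_univ_two, hrow, hrow, hzero, hone, Nat.sub_zero, Nat.sub_self]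
  push_cast [Nat.one_le_two_pow]
  ring

end ReedMuller

/-- the homogeneous weight enumerator of the binary Reed–Muller code
`RM₂(m-2, m)`, for `m ≥ 3`. -/
theorem homWeightEnum_RM_dual (m : ℕ) (hm : 3 ≤ m) :
    homWeightEnum ℂ (RMCode (ZMod 2) (m - 2) m) =
      MvPolynomial.C (((2 : ℂ) ^ (m + 1))⁻¹) *
        ((MvPolynomial.X 0 - MvPolynomial.X 1) ^ (2 ^ m) +
          MvPolynomial.C (2 * ((2 : ℂ) ^ m - 1)) *
            ((MvPolynomial.X 0 - MvPolynomial.X 1) ^ (2 ^ (m - 1)) *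
              (MvPolynomial.X 0 + MvPolynomial.X 1) ^ (2 ^ (m - 1))) +
          (MvPolynomial.X 0 + MvPolynomial.X 1) ^ (2 ^ m)) := by
  have hW := natCard_mul_homWeightEnum_dualCode ℂ (affineCode (ZMod 2) m)
  rw [← RMCode_sub_two_eq_dualCode (by omega), natCard_affineCode,
    homWeightEnum_affineCode ℂ (by omega)] at hW
  simp only [map_add, map_mul, map_pow, map_natCast, aeval_X, Matrix.cons_val_zero,
    Matrix.cons_val_one] at hW
  have hC : ((2 * (2 ^ m - 1) : ℕ) : MvPolynomial (Fin 2) ℂ) = C (2 * ((2 : ℂ) ^ m - 1)) := by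
    rw [← map_natCast C]
    push_cast [Nat.one_le_two_pow]
    rfl
  set W := homWeightEnum ℂ (RMCode (ZMod 2) (m - 2) m)
  calc W = C ((2 : ℂ) ^ (m + 1))⁻¹ * (((2 ^ (m + 1) : ℕ) : MvPolynomial (Fin 2) ℂ) * W) := by
        rw [← mul_assoc, ← map_natCast C, ← map_mul, Nat.cast_pow, Nat.cast_ofNat,
          inv_mul_cancel₀ (pow_ne_zero _ two_ne_zero), map_one, one_mul]
    _ = _ := by
        rw [hW, hC]
        ring
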